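/- Let L = Rg₁ ⊕ Rg₂ be a free R-lattice of rank 2 over R = ℤ_(p)C_p with R-valued Hermitian Gram matrix [[pe₁, 1-σ], [1-σ^{-1}, pe₁]] where e₁ = (1/p)∑σ^i. Then L is not an elementary lattice: pL^# is not contained in L. -/

import Mathlib

open scoped BigOperators

set_option synthInstance.maxHeartbeats 1000000
set_option maxHeartbeats 1000000

abbrev Cp (p : ℕ) := Multiplicative (ZMod p)

/-- The canonical involution of the group algebra, sending `σ^i` to `σ^{-i}`. -/
noncomputable def conjQCp (p : ℕ) :
    MonoidAlgebra ℚ (Cp p) →+* MonoidAlgebra ℚ (Cp p) :=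
  MonoidAlgebra.mapDomainRingHom ℚ (invMonoidHom : Cp p →* Cp p)

/-- The regular trace of the `p`-dimensional `ℚ`-algebra `ℚC_p`. -/
noncomputable def trReg (p : ℕ) (x : MonoidAlgebra ℚ (Cp p)) : ℚ :=
  LinearMap.trace ℚ (MonoidAlgebra ℚ (Cp p)) (LinearMap.mulLeft ℚ x)

/-- The bilinear form `b(x,y) = (1/p)·Tr_reg(x·ȳ)` on `ℚC_p`. -/
noncomputable def formB (p : ℕ) (x y : MonoidAlgebra ℚ (Cp p)) : ℚ :=
  (p : ℚ)⁻¹ * trReg p (x * conjQCp p y)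


def Zsub (p : ℕ) [Fact p.Prime] : Subring ℚ where
  carrier := {x : ℚ | ¬ (p ∣ x.den)}
  zero_mem' := by simp [Nat.Prime.ne_one (Fact.out (p := p.Prime))]
  one_mem' := by simp [Nat.Prime.ne_one (Fact.out (p := p.Prime))]
  add_mem' := by
    intro a b ha hb hd
    rcases (Nat.Prime.dvd_mul (Fact.out (p := p.Prime))).1
      (hd.trans (Rat.add_den_dvd a b)) with h | h
    exacts [ha h, hb h]
  mul_mem' := by
    intro a b ha hb hd
    rcases (Nat.Prime.dvd_mul (Fact.out (p := p.Prime))).1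
      (hd.trans (Rat.mul_den_dvd a b)) with h | h
    exacts [ha h, hb h]
  neg_mem' := by intro a ha; simpa using ha

noncomputable instance zsubModule (p : ℕ) [Fact p.Prime] (V : Type*) [AddCommGroup V]
    [Module ℚ V] : Module (Zsub p) V :=
  Module.compHom V (algebraMap (Zsub p) ℚ)

/-- The standard lattice `R = ℤ_(p) C_p` inside `ℚC_p`, the `ℤ_(p)`-span of the
group elements. -/
noncomputable def Rlat (p : ℕ) [Fact p.Prime] :
    Submodule (Zsub p) (MonoidAlgebra ℚ (Cp p)) :=
  Submodule.span (Zsub p) (Set.range (MonoidAlgebra.of ℚ (Cp p)))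


/-- A fixed generator of `Cp p`. -/
def sigmaGen (p : ℕ) : Cp p := Multiplicative.ofAdd (1 : ZMod p)

/-- The norm element `1 + σ + ⋯ + σ^{p-1} = p·e₁` of `ℚC_p`. -/
noncomputable def normElQ (p : ℕ) [Fact p.Prime] : MonoidAlgebra ℚ (Cp p) :=
  ∑ g : Cp p, MonoidAlgebra.of ℚ (Cp p) g

/-- The Hermitian form on `(ℚC_p)²` with Gram matrix
`[[p·e₁, 1-σ], [1-σ⁻¹, p·e₁]]`. -/
noncomputable def hermForm2 (p : ℕ) [Fact p.Prime]
    (x y : Fin 2 → MonoidAlgebra ℚ (Cp p)) : MonoidAlgebra ℚ (Cp p) :=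
  ∑ i, ∑ j, x i *
    (MonoidAlgebra.mapDomainRingHom ℚ (invMonoidHom : Cp p →* Cp p)) (y j) *
    (!![normElQ p, 1 - MonoidAlgebra.of ℚ (Cp p) (sigmaGen p);
        1 - MonoidAlgebra.of ℚ (Cp p) (sigmaGen p)⁻¹, normElQ p] i j)

/-!
Since `Tr_reg z = p · z(1)`, the form `(1/p) Tr_reg (h(x, l))` is `∑ⱼ ∑_g (xG)ⱼ(g) lⱼ(g)`,
where `G` is the Gram matrix, so every `x` with `xG ∈ R²` lies in `L^#`. Take
`x = (e₁/p, b)` with `b(σᵗ) = (t - (p-1)/2)/p`. Then `(e₁/p)(1 - σ) = 0`, and `b · pe₁ = 0`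
because the coefficients of `b` sum to zero, while `(e₁/p) · pe₁ = e₁` has all coefficients
`1/p`; adding `b(1 - σ⁻¹)`, whose coefficients are `b(g) - b(gσ) = -1/p` except for one
wrap-around `(p-1)/p`, makes them integral. So `x ∈ L^#`, but `p · (e₁/p) = e₁ ∉ R`.
-/

namespace MonoidAlgebra

variable {k G : Type*} [CommRing k]

lemma coeff_mul_eq_sum [Group G] [Fintype G] (x y : MonoidAlgebra k G) (g : G) :
    (x * y).coeff g = ∑ h, x.coeff h * y.coeff (h⁻¹ * g) := by
  rw [coeff_mul_apply_left, Finsupp.sum_fintype]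
  exact fun _ => zero_mul _

lemma trace_mulLeft [Group G] [Fintype G] (x : MonoidAlgebra k G) :
    LinearMap.trace k (MonoidAlgebra k G) (LinearMap.mulLeft k x)
      = Fintype.card G • x.coeff 1 := by
  classical
  rw [LinearMap.trace_eq_matrix_trace k (MonoidAlgebra.basis G k), Matrix.trace]
  have hdiag : ∀ g, (LinearMap.toMatrix (MonoidAlgebra.basis G k) (MonoidAlgebra.basis G k)
      (LinearMap.mulLeft k x)).diag g = x.coeff 1 := by
    intro g
    rw [Matrix.diag_apply, LinearMap.toMatrix_apply]
    change (x * single g 1).coeff g = x.coeff 1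
    simp
  simp only [hdiag, Finset.sum_const, Finset.card_univ]

lemma coeff_mapDomainRingHom_inv [CommGroup G] (x : MonoidAlgebra k G) (g : G) :
    (mapDomainRingHom k (invMonoidHom : G →* G) x).coeff g = x.coeff g⁻¹ := by
  change (mapDomainRingEquiv k (MulEquiv.inv G) x).coeff g = _
  simp

lemma coeff_one_mul_mapDomainRingHom_inv [CommGroup G] [Fintype G] (x y : MonoidAlgebra k G) :
    (x * mapDomainRingHom k (invMonoidHom : G →* G) y).coeff 1 = ∑ g, x.coeff g * y.coeff g := by
  simp only [coeff_mul_eq_sum, coeff_mapDomainRingHom_inv, mul_one, inv_inv]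

lemma coeff_sum_of [MulOneClass G] [Fintype G] (g : G) : (∑ h, of k G h).coeff g = 1 := by
  classical
  simp [Finsupp.single_apply]

lemma mul_sum_of [Group G] [Fintype G] (x : MonoidAlgebra k G) :
    x * ∑ g, of k G g = (∑ g, x.coeff g) • ∑ g, of k G g := by
  ext h
  simp only [coeff_mul_eq_sum, coeff_sum_of, coeff_smul_apply, mul_one, smul_eq_mul]

lemma coeff_mul_one_sub_of [Group G] (x : MonoidAlgebra k G) (g h : G) :
    (x * (1 - of k G g)).coeff h = x.coeff h - x.coeff (h * g⁻¹) := by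
  simp [mul_sub]

end MonoidAlgebra

open MonoidAlgebra
open scoped Matrix

noncomputable def gramMatrix (p : ℕ) [Fact p.Prime] :
    Matrix (Fin 2) (Fin 2) (MonoidAlgebra ℚ (Cp p)) :=
  !![normElQ p, 1 - of ℚ (Cp p) (sigmaGen p); 1 - of ℚ (Cp p) (sigmaGen p)⁻¹, normElQ p]

noncomputable def ramp (p : ℕ) [NeZero p] : MonoidAlgebra ℚ (Cp p) :=
  ofCoeff (Finsupp.equivFunOnFinite.symm
    fun g => (((Multiplicative.toAdd g).val : ℚ) - (p - 1) / 2) / p)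

noncomputable def dualWitness (p : ℕ) [Fact p.Prime] : Fin 2 → MonoidAlgebra ℚ (Cp p) :=
  ![((p : ℚ) ^ 2)⁻¹ • normElQ p, ramp p]

section

variable {p : ℕ}

lemma trReg_eq [NeZero p] (z : MonoidAlgebra ℚ (Cp p)) : trReg p z = p * z.coeff 1 := by
  rw [trReg, trace_mulLeft, Fintype.card_multiplicative, ZMod.card, nsmul_eq_mul]

lemma ZMod.sum_val_eq_sum_range [NeZero p] : ∑ t : ZMod p, t.val = ∑ i ∈ Finset.range p, i := by
  obtain ⟨n, rfl⟩ : ∃ n, p = n + 1 := Nat.exists_eq_succ_of_ne_zero (NeZero.ne p)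
  exact Fin.sum_univ_eq_sum_range (fun i => i) (n + 1)

lemma coeff_ramp [NeZero p] (g : Cp p) :
    (ramp p).coeff g = (((Multiplicative.toAdd g).val : ℚ) - (p - 1) / 2) / p := by
  simp [ramp]

lemma sum_coeff_ramp [NeZero p] : ∑ g, (ramp p).coeff g = 0 := by
  have hsum : ∑ g : Cp p, ((Multiplicative.toAdd g).val : ℚ) = p * (p - 1) / 2 := by
    have h := congrArg (Nat.cast : ℕ → ℚ) (Finset.sum_range_id_mul_two p)
    rw [← ZMod.sum_val_eq_sum_range] at h
    push_cast [Nat.cast_sub NeZero.one_le] at h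
    rw [Fintype.sum_equiv Multiplicative.toAdd _ (fun t : ZMod p => (t.val : ℚ)) fun _ => rfl]
    linarith
  simp only [coeff_ramp, ← Finset.sum_div, Finset.sum_sub_distrib, hsum, Finset.sum_const,
    Finset.card_univ, Fintype.card_multiplicative, ZMod.card, nsmul_eq_mul]
  ring

variable [Fact p.Prime]

lemma inv_natCast_notMem_Zsub : (p : ℚ)⁻¹ ∉ Zsub p := by
  intro h
  exact h (by rw [Rat.inv_natCast_den_of_pos (Fact.out : p.Prime).pos])

lemma mem_Rlat_iff {z : MonoidAlgebra ℚ (Cp p)} : z ∈ Rlat p ↔ ∀ g, z.coeff g ∈ Zsub p := by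
  constructor
  · intro hz g
    induction hz using Submodule.span_induction with
    | mem w hw =>
      obtain ⟨h, rfl⟩ := hw
      classical
      rw [of_apply, coeff_single, Finsupp.single_apply]
      split_ifs
      exacts [one_mem _, zero_mem _]
    | zero => exact zero_mem _
    | add u v _ _ hu hv => exact add_mem hu hv
    | smul c u _ hu => exact mul_mem c.2 hu
  · intro hz
    rw [← sum_coeff_single z, Finsupp.sum_fintype _ _ fun g => single_zero g]
    refine Submodule.sum_mem _ fun g _ => ?_
    have hsingle : single g (z.coeff g) = (⟨z.coeff g, hz g⟩ : Zsub p) • of ℚ (Cp p) g := by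
      change _ = z.coeff g • single g 1
      rw [smul_single, smul_eq_mul, mul_one]
    rw [hsingle]
    exact Submodule.smul_mem _ _ (Submodule.subset_span ⟨g, rfl⟩)

lemma hermForm2_eq_sum_vecMul (x y : Fin 2 → MonoidAlgebra ℚ (Cp p)) :
    hermForm2 p x y = ∑ j, (x ᵥ* gramMatrix p) j * conjQCp p (y j) := by
  rw [hermForm2, Finset.sum_comm]
  refine Finset.sum_congr rfl fun j _ => ?_
  rw [Matrix.vecMul, dotProduct, Finset.sum_mul]
  refine Finset.sum_congr rfl fun i _ => ?_
  rw [gramMatrix, conjQCp]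
  ring

lemma inv_mul_trReg_hermForm2_mem_Zsub {x l : Fin 2 → MonoidAlgebra ℚ (Cp p)}
    (hx : ∀ j, (x ᵥ* gramMatrix p) j ∈ Rlat p) (hl : ∀ j, l j ∈ Rlat p) :
    (p : ℚ)⁻¹ * trReg p (hermForm2 p x l) ∈ Zsub p := by
  have hp : (p : ℚ) ≠ 0 := Nat.cast_ne_zero.mpr (NeZero.ne p)
  rw [trReg_eq, inv_mul_cancel_left₀ hp, hermForm2_eq_sum_vecMul, coeff_sum,
    Finsupp.finsetSum_apply]
  refine sum_mem fun j _ => ?_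
  rw [conjQCp, coeff_one_mul_mapDomainRingHom_inv]
  exact sum_mem fun g _ => mul_mem (mem_Rlat_iff.1 (hx j) g) (mem_Rlat_iff.1 (hl j) g)

lemma normElQ_mul_self : normElQ p * normElQ p = (p : ℚ) • normElQ p := by
  rw [normElQ, mul_sum_of]
  simp only [coeff_sum_of, Finset.sum_const, Finset.card_univ, Fintype.card_multiplicative,
    ZMod.card, nsmul_eq_mul, mul_one]

lemma normElQ_mul_one_sub_of (g : Cp p) : normElQ p * (1 - of ℚ (Cp p) g) = 0 := by
  ext h
  rw [coeff_mul_one_sub_of, normElQ, coeff_sum_of, coeff_sum_of, sub_self, coeff_zero,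
    Finsupp.coe_zero, Pi.zero_apply]

lemma ramp_mul_normElQ : ramp p * normElQ p = 0 := by
  rw [normElQ, mul_sum_of, sum_coeff_ramp, zero_smul]

lemma inv_add_coeff_ramp_sub_coeff_ramp_mul_sigmaGen (g : Cp p) :
    (p : ℚ)⁻¹ + (ramp p).coeff g - (ramp p).coeff (g * sigmaGen p)
      = (((Multiplicative.toAdd g).val + 1) / p : ℕ) := by
  have hp : (p : ℚ) ≠ 0 := Nat.cast_ne_zero.mpr (NeZero.ne p)
  set t := Multiplicative.toAdd g
  have hval : (Multiplicative.toAdd (g * sigmaGen p)).val + p * ((t.val + 1) / p)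
      = t.val + 1 := by
    rw [toAdd_mul, sigmaGen, toAdd_ofAdd, ZMod.val_add, ZMod.val_one]
    exact Nat.mod_add_div _ _
  have hq : ((Multiplicative.toAdd (g * sigmaGen p)).val : ℚ)
      = t.val + 1 - p * (((t.val + 1) / p : ℕ) : ℚ) := by
    have hcast := congrArg (Nat.cast : ℕ → ℚ) hval
    push_cast at hcast
    linarith
  rw [coeff_ramp, coeff_ramp, hq]
  field_simp
  ring

lemma vecMul_dualWitness_gramMatrix_zero :
    (dualWitness p ᵥ* gramMatrix p) 0
      = (p : ℚ)⁻¹ • normElQ p + ramp p * (1 - of ℚ (Cp p) (sigmaGen p)⁻¹) := by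
  simp only [Matrix.vecMul, dotProduct, dualWitness, gramMatrix, Fin.sum_univ_two,
    Matrix.of_apply, Matrix.cons_val_zero, Matrix.cons_val_one, smul_mul_assoc,
    normElQ_mul_self, smul_smul]
  congr 2
  field_simp

lemma vecMul_dualWitness_gramMatrix_one : (dualWitness p ᵥ* gramMatrix p) 1 = 0 := by
  simp only [Matrix.vecMul, dotProduct, dualWitness, gramMatrix, Fin.sum_univ_two,
    Matrix.of_apply, Matrix.cons_val_zero, Matrix.cons_val_one, smul_mul_assoc,
    normElQ_mul_one_sub_of, ramp_mul_normElQ, smul_zero, add_zero]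

lemma vecMul_dualWitness_gramMatrix_mem_Rlat :
    ∀ j, (dualWitness p ᵥ* gramMatrix p) j ∈ Rlat p := by
  refine Fin.forall_fin_two.2 ⟨?_, ?_⟩
  · rw [vecMul_dualWitness_gramMatrix_zero, mem_Rlat_iff]
    intro g
    rw [coeff_add, Finsupp.add_apply, coeff_smul_apply, normElQ, coeff_sum_of,
      coeff_mul_one_sub_of, inv_inv, smul_eq_mul, mul_one, ← add_sub_assoc,
      inv_add_coeff_ramp_sub_coeff_ramp_mul_sigmaGen]
    exact natCast_mem _ _
  · rw [vecMul_dualWitness_gramMatrix_one]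
    exact zero_mem _

lemma smul_dualWitness_zero_notMem_Rlat : (p : ℚ) • dualWitness p 0 ∉ Rlat p := by
  have hp : (p : ℚ) ≠ 0 := Nat.cast_ne_zero.mpr (NeZero.ne p)
  intro h
  have hcoeff := mem_Rlat_iff.1 h 1
  rw [dualWitness, Matrix.cons_val_zero, smul_smul, coeff_smul_apply, normElQ, coeff_sum_of,
    smul_eq_mul, mul_one, sq, mul_inv, mul_inv_cancel_left₀ hp] at hcoeff
  exact inv_natCast_notMem_Zsub hcoeff

end

/-- The free `R`-lattice `L = Rg₁ ⊕ Rg₂` of rank 2 with Hermitian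
Gram matrix `[[p·e₁, 1-σ], [1-σ^{-1}, p·e₁]]`, carrying the bilinear form
`B = (1/p)·Tr_reg ∘ h`, is not elementary: `pL^#` is not contained in `L`. -/
theorem stmt18 (p : ℕ) [Fact p.Prime] :
    ¬ (∀ x : Fin 2 → MonoidAlgebra ℚ (Cp p),
        (∀ l : Fin 2 → MonoidAlgebra ℚ (Cp p), (∀ i, l i ∈ Rlat p) →
            (p : ℚ)⁻¹ * trReg p (hermForm2 p x l) ∈ Zsub p) →
        ∀ i, (p : ℚ) • x i ∈ Rlat p) := by
  intro hElementary
  have hdual : ∀ l : Fin 2 → MonoidAlgebra ℚ (Cp p), (∀ i, l i ∈ Rlat p) →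
      (p : ℚ)⁻¹ * trReg p (hermForm2 p (dualWitness p) l) ∈ Zsub p :=
    fun _ hl => inv_mul_trReg_hermForm2_mem_Zsub vecMul_dualWitness_gramMatrix_mem_Rlat hl
  exact smul_dualWitness_zero_notMem_Rlat (hElementary (dualWitness p) hdual 0)
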